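/- arXiv:1609.01543 — 5 statements merged into one kernel-verified Lean document; each statement's English description precedes it below -/
import Mathlib

section
/- For every integer m ≥ 1, the map T defined by Tx = H^(m)x is a linear bijection from the Hilbert difference sequence space h_c(Δ^(m)) onto the space c of convergent real sequences, and it is norm-preserving when h_c(Δ^(m)) carries the norm ‖x‖ = sup_n |(H^(m)x)_n| and c carries the sup norm. In particular h_c(Δ^(m)) is linearly isometrically isomorphic to c. -/
open Filter Finset Topology

/- Real sequences are modelled as functions `ℕ → ℝ`, where the Lean index `n : ℕ`
corresponds to the paper's index `n + 1` (the paper indexes sequences by `k ≥ 1`).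
Thus the paper's entry `h_{nk} = ∑_{i=k}^{n} (-1)^{i-k} C(m, i-k) / (n+i-1)`
(for `1 ≤ k ≤ n`) becomes, with 0-based indices,
`hMat m n k = ∑_{i ∈ Icc k n} (-1)^{i-k} C(m, i-k) / (n+i+1)`. -/

/-- The entries of the triangle matrix `H^(m) = H Δ^(m)` (0-based indexing). -/
noncomputable def hMat (m n k : ℕ) : ℝ :=
  ∑ i ∈ Finset.Icc k n, (-1 : ℝ) ^ (i - k) * (Nat.choose m (i - k) : ℝ) / ((n + i + 1 : ℕ) : ℝ)

/-- The `H^(m)`-transform of a sequence: `(H^(m) x)_n = ∑_{k=1}^{n} h_{nk} x_k`. -/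
noncomputable def hTrans (m : ℕ) (x : ℕ → ℝ) (n : ℕ) : ℝ :=
  ∑ k ∈ Finset.range (n + 1), hMat m n k * x k

/-- `h_0(Δ^(m))`: sequences whose `H^(m)`-transform tends to `0`. -/
def hZero (m : ℕ) : Set (ℕ → ℝ) := {x | Tendsto (hTrans m x) atTop (𝓝 0)}

/-- `h_c(Δ^(m))`: sequences whose `H^(m)`-transform converges. -/
def hConv (m : ℕ) : Set (ℕ → ℝ) := {x | ∃ L : ℝ, Tendsto (hTrans m x) atTop (𝓝 L)}

/-- `h_∞(Δ^(m))`: sequences whose `H^(m)`-transform is bounded. -/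
def hBdd (m : ℕ) : Set (ℕ → ℝ) := {x | ∃ M : ℝ, ∀ n, |hTrans m x n| ≤ M}

/-- The space `c₀` of null real sequences. -/
def c0Seq : Set (ℕ → ℝ) := {y | Tendsto y atTop (𝓝 0)}

/-- The space `c` of convergent real sequences. -/
def cSeq : Set (ℕ → ℝ) := {y | ∃ L : ℝ, Tendsto y atTop (𝓝 L)}

/-- The space `ℓ∞` of bounded real sequences. -/
def linfSeq : Set (ℕ → ℝ) := {y | ∃ M : ℝ, ∀ n, |y n| ≤ M}

/-- The sup norm `‖y‖ = sup_n |y_n|` of a sequence. -/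
noncomputable def supNorm (y : ℕ → ℝ) : ℝ := ⨆ n, |y n|

/-- The norm `‖x‖ = sup_n |(H^(m) x)_n|` on the Hilbert difference sequence spaces. -/
noncomputable def hNorm (m : ℕ) (x : ℕ → ℝ) : ℝ := supNorm (hTrans m x)

/-! `H^(m)` is lower triangular with diagonal entries `1 / (2n + 1) ≠ 0`, so `H^(m) x = y` can be
solved for `x` by forward substitution, uniquely, for every sequence `y`. Hence `H^(m)` is a linear
bijection of all real sequences, and `h_c(Δ^(m))`, being the preimage of `c`, is mapped onto `c`. -/

section TriangleTransform

variable {R : Type*} [CommSemiring R]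

def triangleTransform (a : ℕ → ℕ → R) :
    (ℕ → R) →ₗ[R] (ℕ → R) where
  toFun x n := ∑ k ∈ range (n + 1), a n k * x k
  map_add' x y := by ext n; simp [mul_add, sum_add_distrib]
  map_smul' c x := by ext n; simp [mul_sum, mul_left_comm]

lemma triangleTransform_apply (a : ℕ → ℕ → R) (x : ℕ → R) (n : ℕ) :
    triangleTransform a x n = ∑ k ∈ range n, a n k * x k + a n n * x n := by
  simp [triangleTransform, sum_range_succ]

variable {K : Type*} [Field K] {a : ℕ → ℕ → K}

noncomputable def triangleSolve (a : ℕ → ℕ → K) (y : ℕ → K) : ℕ → K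
  | n => (y n - ∑ k ∈ (range n).attach, a n k * triangleSolve a y k) / a n n
decreasing_by exact mem_range.mp k.2

lemma triangleTransform_triangleSolve (ha : ∀ n, a n n ≠ 0) (y : ℕ → K) :
    triangleTransform a (triangleSolve a y) = y := by
  ext n
  rw [triangleTransform_apply, triangleSolve,
    sum_attach (range n) (fun k => a n k * triangleSolve a y k),
    mul_div_cancel₀ _ (ha n)]
  ring

lemma triangleTransform_injective (ha : ∀ n, a n n ≠ 0) :
    Function.Injective (triangleTransform a) := by
  intro x x' h
  funext n
  induction n using Nat.strong_induction_on with
  | _ n ih =>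
    have hn := congrFun h n
    rw [triangleTransform_apply, triangleTransform_apply,
      sum_congr rfl fun k hk => by rw [ih k (mem_range.mp hk)]] at hn
    exact mul_left_cancel₀ (ha n) (add_left_cancel hn)

lemma triangleTransform_bijective (ha : ∀ n, a n n ≠ 0) :
    Function.Bijective (triangleTransform a) :=
  ⟨triangleTransform_injective ha, fun y => ⟨_, triangleTransform_triangleSolve ha y⟩⟩

end TriangleTransform

lemma hTrans_eq_triangleTransform (m : ℕ) : hTrans m = triangleTransform (hMat m) := rfl

lemma hMat_diag_ne_zero (m n : ℕ) : hMat m n n ≠ 0 := by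
  simp only [hMat, Icc_self, sum_singleton, Nat.sub_self, pow_zero, Nat.choose_zero_right]
  positivity

lemma hConv_eq_preimage (m : ℕ) : hConv m = hTrans m ⁻¹' cSeq := rfl

lemma hTrans_bijective (m : ℕ) : Function.Bijective (hTrans m) :=
  triangleTransform_bijective (hMat_diag_ne_zero m)

theorem hilbert_diff_hc_iso_c_general (m : ℕ) :
    (∀ (a b : ℝ) (x y : ℕ → ℝ),
      hTrans m (fun k => a * x k + b * y k) = fun n => a * hTrans m x n + b * hTrans m y n) ∧
    Set.BijOn (hTrans m) (hConv m) cSeq ∧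
    (∀ x ∈ hConv m, hNorm m x = supNorm (hTrans m x)) := by
  refine ⟨fun a b x y => ?_, ?_, fun x _ => rfl⟩
  · have hlin := (triangleTransform (hMat m)).map_add (a • x) (b • y)
    rw [map_smul, map_smul, ← hTrans_eq_triangleTransform] at hlin
    exact hlin
  · rw [hConv_eq_preimage]
    exact (hTrans_bijective m).bijOn_preimage

/-- The map `T x = H^(m) x` is a linear, norm-preserving bijection from `hConv m` onto `cSeq`. -/
theorem hilbert_diff_hc_iso_c (m : ℕ) (hm : 1 ≤ m) :
    (∀ (a b : ℝ) (x y : ℕ → ℝ),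
      hTrans m (fun k => a * x k + b * y k) = fun n => a * hTrans m x n + b * hTrans m y n) ∧
    Set.BijOn (hTrans m) (hConv m) cSeq ∧
    (∀ x ∈ hConv m, hNorm m x = supNorm (hTrans m x)) :=
  hilbert_diff_hc_iso_c_general m
end

section
/- For every integer m ≥ 1, let b^(k) be the k-th column of the inverse triangle B of H^(m) and let t be the sequence t_n = Σ_{k=1}^{n} B_{nk} (so that H^(m)t is the constant sequence 1). Then {t, b^(1), b^(2), ...} is a basis of h_c(Δ^(m)) equipped with the norm ‖x‖ = sup_n |(H^(m)x)_n|: every x ∈ h_c(Δ^(m)) has a unique representation x = s·t + Σ_k ((H^(m)x)_k − s) b^(k), where s = lim_{k→∞} (H^(m)x)_k and the series converges to x − s·t in this norm. -/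
open Filter Finset Topology

/-! Since `H^(m) B = I`, the transform `H^(m)` sends the column `b^(k)` to the unit sequence
`e_k` and the row sums `t` to the constant sequence `1`. So `H^(m)` maps the remainder
`x - s t - ∑_{k ≤ K} λ_k b^(k)` to `(H^(m) x)_n - s - 1_{n ≤ K} λ_n`, and the theorem becomes the
statement that `{1, e_0, e_1, …}` is a basis of the space `c` of convergent sequences under the
sup norm. -/

section Transform

variable {m : ℕ}

lemma hTrans_sub (x y : ℕ → ℝ) (n : ℕ) :
    hTrans m (x - y) n = hTrans m x n - hTrans m y n := by
  simp [hTrans, mul_sub, sum_sub_distrib]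

lemma hTrans_smul (c : ℝ) (x : ℕ → ℝ) (n : ℕ) :
    hTrans m (c • x) n = c * hTrans m x n := by
  simp [hTrans, mul_sum, mul_left_comm]

lemma hTrans_finset_sum {ι : Type*} (s : Finset ι) (x : ι → ℕ → ℝ) (n : ℕ) :
    hTrans m (fun j => ∑ i ∈ s, x i j) n = ∑ i ∈ s, hTrans m (x i) n := by
  simp only [hTrans, mul_sum]
  exact sum_comm

lemma hTrans_congr {x y : ℕ → ℝ} {n : ℕ} (h : ∀ j ≤ n, x j = y j) :
    hTrans m x n = hTrans m y n :=
  sum_congr rfl fun j hj => by rw [h j (Nat.lt_succ_iff.mp (mem_range.mp hj))]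

end Transform

section RightInverse

variable {m : ℕ} {B : ℕ → ℕ → ℝ}

lemma hTrans_column (hBtri : ∀ n k : ℕ, n < k → B n k = 0)
    (hBright : ∀ n k : ℕ, (∑ j ∈ Icc k n, hMat m n j * B j k) = if n = k then 1 else 0)
    (k n : ℕ) :
    hTrans m (fun j => B j k) n = if n = k then 1 else 0 := by
  rw [← hBright n k, hTrans]
  refine (sum_subset (fun j hj => ?_) fun j hj hj' => ?_).symm
  · simp only [mem_Icc, mem_range] at hj ⊢
    omega
  · simp only [mem_Icc, mem_range, not_and, not_le] at hj hj'
    rw [hBtri j k (by omega), mul_zero]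

lemma hTrans_sum_mul_column (hBtri : ∀ n k : ℕ, n < k → B n k = 0)
    (hBright : ∀ n k : ℕ, (∑ j ∈ Icc k n, hMat m n j * B j k) = if n = k then 1 else 0)
    (lam : ℕ → ℝ) (K n : ℕ) :
    hTrans m (fun j => ∑ k ∈ range (K + 1), lam k * B j k) n = Set.indicator (Set.Iic K) lam n := by
  have hterm : ∀ k, hTrans m (fun j => lam k * B j k) n = lam k * if n = k then 1 else 0 :=
    fun k => by rw [← hTrans_column hBtri hBright]; exact hTrans_smul (lam k) (fun j => B j k) n
  simp only [hTrans_finset_sum, hterm, mul_ite, mul_one, mul_zero, sum_ite_eq, mem_range,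
    Nat.lt_succ_iff, Set.indicator_apply, Set.mem_Iic]

lemma hTrans_rowSum (hBtri : ∀ n k : ℕ, n < k → B n k = 0)
    (hBright : ∀ n k : ℕ, (∑ j ∈ Icc k n, hMat m n j * B j k) = if n = k then 1 else 0)
    (n : ℕ) :
    hTrans m (fun j => ∑ k ∈ range (j + 1), B j k) n = 1 := by
  have htrunc : hTrans m (fun j => ∑ k ∈ range (j + 1), B j k) n
      = hTrans m (fun j => ∑ k ∈ range (n + 1), 1 * B j k) n := by
    refine hTrans_congr fun j hj => ?_
    simp only [one_mul]
    refine sum_subset (range_subset_range.mpr (by omega)) fun k _ hk => hBtri j k ?_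
    simpa using hk
  rw [htrunc, hTrans_sum_mul_column hBtri hBright (fun _ => 1)]
  simp

lemma hTrans_basis_remainder (hBtri : ∀ n k : ℕ, n < k → B n k = 0)
    (hBright : ∀ n k : ℕ, (∑ j ∈ Icc k n, hMat m n j * B j k) = if n = k then 1 else 0)
    (x : ℕ → ℝ) (s : ℝ) (lam : ℕ → ℝ) (K : ℕ) :
    hTrans m ((x - s • fun j => ∑ k ∈ range (j + 1), B j k) -
        fun j => ∑ k ∈ range (K + 1), lam k * B j k)
      = fun n => hTrans m x n - s - Set.indicator (Set.Iic K) lam n := by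
  funext n
  rw [hTrans_sub, hTrans_sub, hTrans_smul, hTrans_rowSum hBtri hBright,
    hTrans_sum_mul_column hBtri hBright, mul_one]

end RightInverse

section SupNorm

variable {y : ℕ → ℝ} {s : ℝ}

lemma supNorm_nonneg (y : ℕ → ℝ) : 0 ≤ supNorm y :=
  Real.iSup_nonneg fun _ => abs_nonneg _

lemma supNorm_le {c : ℝ} (hc : 0 ≤ c) (h : ∀ n, |y n| ≤ c) : supNorm y ≤ c :=
  Real.iSup_le h hc

lemma abs_le_supNorm_of_tendsto (hy : Tendsto y atTop (𝓝 s)) (n : ℕ) : |y n| ≤ supNorm y :=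
  le_ciSup hy.abs.bddAbove_range n

lemma abs_lim_le_supNorm (hy : Tendsto y atTop (𝓝 s)) : |s| ≤ supNorm y :=
  le_of_tendsto' hy.abs (abs_le_supNorm_of_tendsto hy)

theorem tendsto_supNorm_sub_indicator_Iic (hy : Tendsto y atTop (𝓝 s)) :
    Tendsto (fun K => supNorm fun n => y n - s - Set.indicator (Set.Iic K) (fun k => y k - s) n)
      atTop (𝓝 0) := by
  rw [Metric.tendsto_atTop]
  intro ε hε
  obtain ⟨N, hN⟩ := Metric.tendsto_atTop.mp hy (ε / 2) (half_pos hε)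
  refine ⟨N, fun K hK => ?_⟩
  have htail : ∀ n, |y n - s - Set.indicator (Set.Iic K) (fun k => y k - s) n| ≤ ε / 2 := by
    intro n
    by_cases hn : n ≤ K
    · simpa [hn] using (half_pos hε).le
    · simpa [hn, ← Real.dist_eq] using (hN n (by omega)).le
  rw [Real.dist_0_eq_abs, abs_of_nonneg (supNorm_nonneg _)]
  exact (supNorm_le (half_pos hε).le htail).trans_lt (half_lt_self hε)

theorem eq_of_tendsto_supNorm_sub_indicator_Iic {s' : ℝ} {lam : ℕ → ℝ}
    (hy : Tendsto y atTop (𝓝 s))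
    (h : Tendsto (fun K => supNorm fun n => y n - s' - Set.indicator (Set.Iic K) lam n)
      atTop (𝓝 0)) :
    s' = s ∧ lam = fun n => y n - s := by
  have hlim : ∀ K : ℕ,
      Tendsto (fun n => y n - s' - Set.indicator (Set.Iic K) lam n) atTop (𝓝 (s - s')) := by
    intro K
    refine (hy.sub_const s').congr' ?_
    filter_upwards [eventually_gt_atTop K] with n hn
    simp [Set.indicator_of_notMem (Set.notMem_Iic.mpr hn)]
  have hzero : ∀ a : ℝ,
      (∀ᶠ K in atTop, |a| ≤ supNorm fun n => y n - s' - Set.indicator (Set.Iic K) lam n) →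
        a = 0 :=
    fun a ha => abs_nonpos_iff.mp (ge_of_tendsto h ha)
  have hs : s' = s := by
    have := hzero (s - s') (Eventually.of_forall fun K => abs_lim_le_supNorm (hlim K))
    linarith
  subst hs
  refine ⟨rfl, funext fun n => ?_⟩
  have := hzero (y n - s' - lam n) <| eventually_atTop.mpr ⟨n, fun K hK => by
    simpa [Set.indicator_of_mem (Set.mem_Iic.mpr hK)] using abs_le_supNorm_of_tendsto (hlim K) n⟩
  linarith

end SupNorm

theorem hilbert_diff_hc_basis_general (m : ℕ)
    (B : ℕ → ℕ → ℝ)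
    (hBtri : ∀ n k : ℕ, n < k → B n k = 0)
    (hBright : ∀ n k : ℕ, (∑ j ∈ Finset.Icc k n, hMat m n j * B j k) = if n = k then 1 else 0) :
    ∀ x ∈ hConv m, ∀ s : ℝ, Tendsto (hTrans m x) atTop (𝓝 s) →
      Tendsto (fun K => hNorm m
          ((x - s • (fun n => ∑ k ∈ Finset.range (n + 1), B n k)) -
            (fun n => ∑ k ∈ Finset.range (K + 1), (hTrans m x k - s) * B n k)))
        atTop (𝓝 0) ∧
      ∀ (s' : ℝ) (lam : ℕ → ℝ),
        Tendsto (fun K => hNorm m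
            ((x - s' • (fun n => ∑ k ∈ Finset.range (n + 1), B n k)) -
              (fun n => ∑ k ∈ Finset.range (K + 1), lam k * B n k)))
          atTop (𝓝 0) →
        s' = s ∧ lam = fun k => hTrans m x k - s := by
  intro x _ s hs
  refine ⟨?_, fun s' lam h => ?_⟩
  · simp only [hNorm, hTrans_basis_remainder hBtri hBright x s (fun k => hTrans m x k - s)]
    exact tendsto_supNorm_sub_indicator_Iic hs
  · simp only [hNorm, hTrans_basis_remainder hBtri hBright] at h
    exact eq_of_tendsto_supNorm_sub_indicator_Iic hs h

/-- With `t_n = ∑_k B n k` (so `H^(m) t = 1`), the family `{t, b^(1), b^(2), …}` is a basis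
of `h_c(Δ^(m))`: every `x` has the unique representation
`x = s t + ∑_k ((H^(m) x)_k - s) b^(k)` with `s = lim_k (H^(m) x)_k`. -/
theorem hilbert_diff_hc_basis (m : ℕ) (hm : 1 ≤ m)
    (B : ℕ → ℕ → ℝ)
    (hBtri : ∀ n k : ℕ, n < k → B n k = 0)
    (hBright : ∀ n k : ℕ, (∑ j ∈ Finset.Icc k n, hMat m n j * B j k) = if n = k then 1 else 0)
    (hBleft : ∀ n k : ℕ, (∑ j ∈ Finset.Icc k n, B n j * hMat m j k) = if n = k then 1 else 0) :
    ∀ x ∈ hConv m, ∀ s : ℝ, Tendsto (hTrans m x) atTop (𝓝 s) →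
      Tendsto (fun K => hNorm m
          ((x - s • (fun n => ∑ k ∈ Finset.range (n + 1), B n k)) -
            (fun n => ∑ k ∈ Finset.range (K + 1), (hTrans m x k - s) * B n k)))
        atTop (𝓝 0) ∧
      ∀ (s' : ℝ) (lam : ℕ → ℝ),
        Tendsto (fun K => hNorm m
            ((x - s' • (fun n => ∑ k ∈ Finset.range (n + 1), B n k)) -
              (fun n => ∑ k ∈ Finset.range (K + 1), lam k * B n k)))
          atTop (𝓝 0) →
        s' = s ∧ lam = fun k => hTrans m x k - s :=
  hilbert_diff_hc_basis_general m B hBtri hBright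
end

section
/- Fix an integer m ≥ 1 and a real sequence a = (a_k). Define the lower-triangular matrix V = (v_{nk}) by v_{nk} = Σ_{j=k}^{n} a_j B_{jk} for 1 ≤ k ≤ n, where B is the inverse triangle of H^(m). Then a belongs to the β-dual of h_c(Δ^(m)) — i.e. the series Σ_k a_k x_k converges for every x ∈ h_c(Δ^(m)) — if and only if V ∈ (c : c), i.e. for every convergent sequence y the sequence ((Vy)_n)_n = (Σ_{k=1}^{n} v_{nk} y_k)_n converges. -/
open Filter Finset Topology

/-!
`H^(m)` and `B` are mutually inverse triangles, so `x ↦ H^(m) x` maps `h_c(Δ^(m))` onto `c`,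
with inverse `y ↦ B y`. Substituting `x = B y` and exchanging the order of the two finite sums
turns the partial sum `∑_{k ≤ n} a_k x_k` into `(V y)_n`, so the two convergence conditions
say the same thing.
-/

def triTransform {R : Type*} [Semiring R] (A : ℕ → ℕ → R) (x : ℕ → R) (n : ℕ) : R :=
  ∑ k ∈ range (n + 1), A n k * x k

theorem sum_range_sum_range_succ_comm {M : Type*} [AddCommMonoid M] (n : ℕ) (f : ℕ → ℕ → M) :
    ∑ k ∈ range (n + 1), ∑ j ∈ range (k + 1), f k j
      = ∑ j ∈ range (n + 1), ∑ k ∈ Icc j n, f k j := by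
  refine sum_comm' fun k j => ?_
  simp only [mem_range, mem_Icc]
  omega

section Semiring

variable {R : Type*} [Semiring R]

theorem triTransform_triTransform (A C : ℕ → ℕ → R) (x : ℕ → R) (n : ℕ) :
    triTransform A (triTransform C x) n
      = ∑ j ∈ range (n + 1), (∑ k ∈ Icc j n, A n k * C k j) * x j := by
  simp only [triTransform, mul_sum, sum_mul, mul_assoc]
  exact sum_range_sum_range_succ_comm n fun k j => A n k * (C k j * x j)

theorem triTransform_triTransform_of_inverse {A C : ℕ → ℕ → R}
    (hAC : ∀ n k : ℕ, (∑ j ∈ Icc k n, A n j * C j k) = if n = k then 1 else 0) (x : ℕ → R) :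
    triTransform A (triTransform C x) = x := by
  ext n
  simp [triTransform_triTransform, hAC, ite_mul]

end Semiring

theorem hilbert_diff_betaDual_hc_general (m : ℕ) (a : ℕ → ℝ)
    (B : ℕ → ℕ → ℝ)
    (hBright : ∀ n k : ℕ, (∑ j ∈ Finset.Icc k n, hMat m n j * B j k) = if n = k then 1 else 0)
    (hBleft : ∀ n k : ℕ, (∑ j ∈ Finset.Icc k n, B n j * hMat m j k) = if n = k then 1 else 0) :
    (∀ x ∈ hConv m, ∃ L : ℝ,
        Tendsto (fun K => ∑ k ∈ Finset.range K, a k * x k) atTop (𝓝 L)) ↔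
    (∀ y ∈ cSeq, ∃ L : ℝ,
        Tendsto (fun n => ∑ k ∈ Finset.range (n + 1),
          (∑ j ∈ Finset.Icc k n, a j * B j k) * y k) atTop (𝓝 L)) := by
  have hV : ∀ y n, ∑ k ∈ range (n + 1), (∑ j ∈ Icc k n, a j * B j k) * y k
      = ∑ k ∈ range (n + 1), a k * triTransform B y k := fun y n =>
    (triTransform_triTransform (fun _ k => a k) B y n).symm
  constructor
  · rintro hβ y ⟨L, hL⟩
    have hHB : hTrans m (triTransform B y) = y := triTransform_triTransform_of_inverse hBright y
    obtain ⟨L', hL'⟩ := hβ _ ⟨L, hHB ▸ hL⟩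
    exact ⟨L', by simpa only [hV] using (tendsto_add_atTop_iff_nat 1).2 hL'⟩
  · intro hVc x hx
    obtain ⟨L, hL⟩ := hVc (hTrans m x) hx
    have hBH : triTransform B (hTrans m x) = x := triTransform_triTransform_of_inverse hBleft x
    refine ⟨L, (tendsto_add_atTop_iff_nat 1).1 ?_⟩
    simpa only [hV, hBH] using hL

/-- `a` is in the β-dual of `hConv m` iff the matrix `V`, `v_{nk} = ∑_{j=k}^n a_j B_{jk}`,
maps `cSeq` into the convergent sequences. -/
theorem hilbert_diff_betaDual_hc (m : ℕ) (hm : 1 ≤ m) (a : ℕ → ℝ)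
    (B : ℕ → ℕ → ℝ)
    (hBtri : ∀ n k : ℕ, n < k → B n k = 0)
    (hBright : ∀ n k : ℕ, (∑ j ∈ Finset.Icc k n, hMat m n j * B j k) = if n = k then 1 else 0)
    (hBleft : ∀ n k : ℕ, (∑ j ∈ Finset.Icc k n, B n j * hMat m j k) = if n = k then 1 else 0) :
    (∀ x ∈ hConv m, ∃ L : ℝ,
        Tendsto (fun K => ∑ k ∈ Finset.range K, a k * x k) atTop (𝓝 L)) ↔
    (∀ y ∈ cSeq, ∃ L : ℝ,
        Tendsto (fun n => ∑ k ∈ Finset.range (n + 1),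
          (∑ j ∈ Finset.Icc k n, a j * B j k) * y k) atTop (𝓝 L)) :=
  hilbert_diff_betaDual_hc_general m a B hBright hBleft
end

section
/- Fix an integer m ≥ 1 and a real sequence a = (a_k). Define the lower-triangular matrix V = (v_{nk}) by v_{nk} = Σ_{j=k}^{n} a_j B_{jk} for 1 ≤ k ≤ n, where B is the inverse triangle of H^(m). Then a belongs to the γ-dual of h_∞(Δ^(m)) — i.e. the partial sums Σ_{k=1}^{n} a_k x_k are bounded in n for every x ∈ h_∞(Δ^(m)) — if and only if V ∈ (ℓ∞ : ℓ∞), i.e. for every bounded sequence y the sequence ((Vy)_n)_n = (Σ_{k=1}^{n} v_{nk} y_k)_n is bounded. -/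
open Filter Finset Topology

/- Write `H = H^(m)`. Swapping the order of summation, `(V y)_n = ∑_{j ≤ n} a_j (B y)_j`, so for
`y = H x` the `V`-transform of `y` is the sequence of partial sums of `∑ a_k x_k`. As `x ↦ H x` is a
bijection of `h_∞(Δ^(m))` onto `ℓ∞` with inverse `y ↦ B y`, the two conditions coincide. -/

def triMulVec {R : Type*} [CommSemiring R] (A : ℕ → ℕ → R) (x : ℕ → R) (n : ℕ) : R :=
  ∑ k ∈ range (n + 1), A n k * x k

lemma sum_range_sum_Icc_comm {M : Type*} [AddCommMonoid M] (n : ℕ) (f : ℕ → ℕ → M) :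
    ∑ k ∈ range (n + 1), ∑ j ∈ Icc k n, f k j = ∑ j ∈ range (n + 1), ∑ k ∈ range (j + 1), f k j :=
  sum_comm' fun k j => by simp only [mem_range, mem_Icc]; omega

section triMulVec

variable {R : Type*} [CommSemiring R]

lemma triMulVec_triMulVec (A C : ℕ → ℕ → R) (y : ℕ → R) (n : ℕ) :
    triMulVec A (triMulVec C y) n = triMulVec (fun n j => ∑ k ∈ Icc j n, A n k * C k j) y n := by
  simp only [triMulVec, mul_sum, sum_mul, sum_range_sum_Icc_comm, mul_assoc]

lemma triMulVec_triMulVec_of_mul_eq_one {A C : ℕ → ℕ → R}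
    (hAC : ∀ n j, ∑ k ∈ Icc j n, A n k * C k j = if n = j then 1 else 0) (y : ℕ → R) (n : ℕ) :
    triMulVec A (triMulVec C y) n = y n := by
  rw [triMulVec_triMulVec]
  simp [triMulVec, hAC]

lemma triMulVec_sum_Icc_mul (a : ℕ → R) (B : ℕ → ℕ → R) (z : ℕ → R) (n : ℕ) :
    triMulVec (fun n k => ∑ j ∈ Icc k n, a j * B j k) z n =
      ∑ j ∈ range (n + 1), a j * triMulVec B z j := by
  simp only [triMulVec, sum_mul, mul_sum, sum_range_sum_Icc_comm, mul_assoc]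

end triMulVec

theorem hilbert_diff_gammaDual_hinf_general (m : ℕ) (a : ℕ → ℝ)
    (B : ℕ → ℕ → ℝ)
    (hBright : ∀ n k : ℕ, (∑ j ∈ Finset.Icc k n, hMat m n j * B j k) = if n = k then 1 else 0)
    (hBleft : ∀ n k : ℕ, (∑ j ∈ Finset.Icc k n, B n j * hMat m j k) = if n = k then 1 else 0) :
    (∀ x ∈ hBdd m, ∃ M : ℝ, ∀ n : ℕ,
        |∑ k ∈ Finset.range (n + 1), a k * x k| ≤ M) ↔
    (∀ y ∈ linfSeq, ∃ M : ℝ, ∀ n : ℕ,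
        |∑ k ∈ Finset.range (n + 1),
          (∑ j ∈ Finset.Icc k n, a j * B j k) * y k| ≤ M) := by
  have hTrans_eq : ∀ x, hTrans m x = triMulVec (hMat m) x := fun _ => rfl
  have partialSums_eq : ∀ x n, ∑ k ∈ range (n + 1), a k * x k =
      triMulVec (fun n k => ∑ j ∈ Icc k n, a j * B j k) (hTrans m x) n := fun x n => by
    simp only [triMulVec_sum_Icc_mul, hTrans_eq, triMulVec_triMulVec_of_mul_eq_one hBleft]
  constructor
  · rintro h y ⟨My, hMy⟩
    have hHx : hTrans m (triMulVec B y) = y :=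
      funext (triMulVec_triMulVec_of_mul_eq_one hBright y)
    obtain ⟨M, hM⟩ := h (triMulVec B y) ⟨My, by rwa [hHx]⟩
    refine ⟨M, fun n => ?_⟩
    have hn := hM n
    rw [partialSums_eq, hHx] at hn
    exact hn
  · rintro h x hx
    obtain ⟨M, hM⟩ := h (hTrans m x) hx
    exact ⟨M, fun n => partialSums_eq x n ▸ hM n⟩

/-- `a` is in the γ-dual of `hBdd m` iff the matrix `V`, `v_{nk} = ∑_{j=k}^n a_j B_{jk}`,
maps `linfSeq` into the bounded sequences. -/
theorem hilbert_diff_gammaDual_hinf (m : ℕ) (hm : 1 ≤ m) (a : ℕ → ℝ)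
    (B : ℕ → ℕ → ℝ)
    (hBtri : ∀ n k : ℕ, n < k → B n k = 0)
    (hBright : ∀ n k : ℕ, (∑ j ∈ Finset.Icc k n, hMat m n j * B j k) = if n = k then 1 else 0)
    (hBleft : ∀ n k : ℕ, (∑ j ∈ Finset.Icc k n, B n j * hMat m j k) = if n = k then 1 else 0) :
    (∀ x ∈ hBdd m, ∃ M : ℝ, ∀ n : ℕ,
        |∑ k ∈ Finset.range (n + 1), a k * x k| ≤ M) ↔
    (∀ y ∈ linfSeq, ∃ M : ℝ, ∀ n : ℕ,
        |∑ k ∈ Finset.range (n + 1),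
          (∑ j ∈ Finset.Icc k n, a j * B j k) * y k| ≤ M) :=
  hilbert_diff_gammaDual_hinf_general m a B hBright hBleft
end

section
/- Fix an integer m ≥ 1, an arbitrary set Y of real sequences, and an infinite matrix A = (a_{nk}). Suppose that for each n and k the series d_{nk} = Σ_{j=k}^{∞} a_{nj} B_{jk} converges, where B is the inverse triangle of H^(m), and let D = (d_{nk}). Then A ∈ (h_0(Δ^(m)) : Y) if and only if the n-th row (a_{nk})_k of A belongs to the β-dual of h_0(Δ^(m)) for every n and D ∈ (c₀ : Y). -/
open Filter Finset Topology

/-- `A ∈ (X : Y)`: for every `x ∈ X` each row-series `∑_k a_{nk} x_k` converges and the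
sequence of the sums belongs to `Y`. -/
def matClass (A : ℕ → ℕ → ℝ) (X Y : Set (ℕ → ℝ)) : Prop :=
  ∀ x ∈ X, ∃ Ax : ℕ → ℝ,
    (∀ n, Tendsto (fun K => ∑ k ∈ Finset.range K, A n k * x k) atTop (𝓝 (Ax n))) ∧ Ax ∈ Y

/-- The β-dual of a set of real sequences. -/
def betaDual (X : Set (ℕ → ℝ)) : Set (ℕ → ℝ) :=
  {a | ∀ x ∈ X, ∃ L : ℝ, Tendsto (fun K => ∑ k ∈ Finset.range K, a k * x k) atTop (𝓝 L)}

/- Every `x ∈ h_0(Δ^(m))` is `x = B y` with `y = H^(m) x ∈ c₀`, and conversely `B` maps `c₀`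
into `h_0(Δ^(m))`. Regrouping a triangular double sum gives
`∑_{k<K} a_k (B y)_k = ∑_{j<K} c_{Kj} y_j` with `c_{Kj} = ∑_{k=j}^{K-1} a_k B_{kj} → d_j`.
If `a` lies in the β-dual, the functionals `y ↦ ∑_j c_{Kj} y_j` converge pointwise on the Banach
space `c₀`, so by Banach–Steinhaus their limit is continuous; evaluating it on the truncations of
`y` shows `∑_k a_k x_k = ∑_j d_j y_j`, and both directions follow from this identity. -/

open scoped ZeroAtInfty

namespace ZeroAtInftyContinuousMap

def ofTendstoAtTop (y : ℕ → ℝ) (hy : Tendsto y atTop (𝓝 0)) : C₀(ℕ, ℝ) :=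
  ⟨⟨y, continuous_of_discreteTopology⟩, by rwa [cocompact_eq_atTop]⟩

lemma tendsto_atTop_zero (f : C₀(ℕ, ℝ)) : Tendsto f atTop (𝓝 0) := by
  simpa [cocompact_eq_atTop] using f.zero_at_infty'

def evalCLM {α : Type*} [TopologicalSpace α] (x : α) : C₀(α, ℝ) →L[ℝ] ℝ where
  toFun f := f x
  map_add' _ _ := rfl
  map_smul' _ _ := rfl
  cont := (BoundedContinuousFunction.evalCLM ℝ x).continuous.comp isometry_toBCF.continuous

@[simp]
lemma evalCLM_apply {α : Type*} [TopologicalSpace α] (x : α) (f : C₀(α, ℝ)) :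
    evalCLM x f = f x :=
  rfl

def truncate (N : ℕ) (f : C₀(ℕ, ℝ)) : C₀(ℕ, ℝ) :=
  ofTendstoAtTop (fun j => if j < N then f j else 0) <| tendsto_const_nhds.congr' <| by
    filter_upwards [eventually_ge_atTop N] with j hj
    simp [not_lt.2 hj]

@[simp]
lemma truncate_apply (N : ℕ) (f : C₀(ℕ, ℝ)) (j : ℕ) :
    truncate N f j = if j < N then f j else 0 :=
  rfl

lemma tendsto_truncate (f : C₀(ℕ, ℝ)) : Tendsto (fun N => truncate N f) atTop (𝓝 f) := by
  rw [tendsto_iff_tendstoUniformly, Metric.tendstoUniformly_iff]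
  intro ε hε
  obtain ⟨N₀, hN₀⟩ := Metric.tendsto_atTop.1 f.tendsto_atTop_zero ε hε
  filter_upwards [eventually_ge_atTop N₀] with N hN j
  by_cases hj : j < N
  · simp [hj, hε]
  · simpa [hj, dist_comm] using hN₀ j (by omega)

end ZeroAtInftyContinuousMap

open ZeroAtInftyContinuousMap in
theorem tendsto_sum_range_mul_of_forall_c0 {c : ℕ → ℕ → ℝ} {d : ℕ → ℝ}
    (hcol : ∀ j, Tendsto (fun K => c K j) atTop (𝓝 (d j)))
    (hrow : ∀ y ∈ c0Seq, ∃ L, Tendsto (fun K => ∑ j ∈ range K, c K j * y j) atTop (𝓝 L))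
    {y : ℕ → ℝ} (hy : y ∈ c0Seq) {L : ℝ}
    (hL : Tendsto (fun K => ∑ j ∈ range K, c K j * y j) atTop (𝓝 L)) :
    Tendsto (fun N => ∑ j ∈ range N, d j * y j) atTop (𝓝 L) := by
  set row : ℕ → C₀(ℕ, ℝ) →L[ℝ] ℝ := fun K => ∑ j ∈ range K, c K j • evalCLM j
  have row_apply (K : ℕ) (f : C₀(ℕ, ℝ)) : row K f = ∑ j ∈ range K, c K j * f j := by
    simp [row]
  choose ℓ hℓ using fun f : C₀(ℕ, ℝ) => hrow f f.tendsto_atTop_zero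
  let Λ := continuousLinearMapOfTendsto row
    (tendsto_pi_nhds.2 fun f => by simpa only [row_apply] using hℓ f)
  have hΛ (f : C₀(ℕ, ℝ)) :
      Tendsto (fun K => ∑ j ∈ range K, c K j * f j) atTop (𝓝 (Λ f)) :=
    hℓ f
  set yf := ofTendstoAtTop y hy
  have hΛy : Λ yf = L := tendsto_nhds_unique (hΛ yf) hL
  have hΛtruncate (N : ℕ) : Λ (truncate N yf) = ∑ j ∈ range N, d j * y j := by
    refine tendsto_nhds_unique (hΛ _) <|
      (tendsto_finsetSum _ fun j _ => (hcol j).mul_const (y j)).congr' ?_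
    filter_upwards [eventually_ge_atTop N] with K hK
    rw [← sum_range_add_sum_Ico _ hK, sum_eq_zero (s := Ico N K) fun j hj => ?_, add_zero]
    · exact sum_congr rfl fun j hj => by rw [truncate_apply, if_pos (mem_range.1 hj)]; rfl
    · simp [(mem_Ico.1 hj).1.not_gt]
  have hΛlim := (Λ.continuous.tendsto yf).comp (tendsto_truncate yf)
  rw [hΛy] at hΛlim
  exact hΛlim.congr hΛtruncate

def lowerMulVec (T : ℕ → ℕ → ℝ) (y : ℕ → ℝ) (n : ℕ) : ℝ :=
  ∑ k ∈ range (n + 1), T n k * y k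

/-- `T S = I` for the lower-triangular parts of `T` and `S`. -/
def IsLowerInverse (T S : ℕ → ℕ → ℝ) : Prop :=
  ∀ n k, ∑ j ∈ Icc k n, T n j * S j k = if n = k then 1 else 0

lemma sum_range_mul_lowerMulVec (a : ℕ → ℝ) (S : ℕ → ℕ → ℝ) (y : ℕ → ℝ) (K : ℕ) :
    ∑ k ∈ range K, a k * lowerMulVec S y k =
      ∑ j ∈ range K, (∑ k ∈ Ico j K, a k * S k j) * y j := by
  simp_rw [lowerMulVec, mul_sum, sum_mul, ← mul_assoc]
  refine sum_comm' fun k j => ?_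
  simp only [mem_range, mem_Ico]
  omega

lemma lowerMulVec_lowerMulVec {T S : ℕ → ℕ → ℝ} (h : IsLowerInverse T S) (y : ℕ → ℝ) :
    lowerMulVec T (lowerMulVec S y) = y := by
  ext n
  rw [lowerMulVec, sum_range_mul_lowerMulVec]
  simp_rw [Ico_add_one_right_eq_Icc, h n, ite_mul, one_mul, zero_mul]
  simp

lemma tendsto_sum_mul_of_mem_betaDual {X : Set (ℕ → ℝ)} {S : ℕ → ℕ → ℝ}
    (hS : ∀ y ∈ c0Seq, lowerMulVec S y ∈ X) {a d : ℕ → ℝ} (ha : a ∈ betaDual X)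
    (hd : ∀ j, Tendsto (fun K => ∑ k ∈ Ico j K, a k * S k j) atTop (𝓝 (d j)))
    {y : ℕ → ℝ} (hy : y ∈ c0Seq) {L : ℝ}
    (hL : Tendsto (fun K => ∑ k ∈ range K, a k * lowerMulVec S y k) atTop (𝓝 L)) :
    Tendsto (fun N => ∑ j ∈ range N, d j * y j) atTop (𝓝 L) := by
  simp_rw [sum_range_mul_lowerMulVec] at hL
  refine tendsto_sum_range_mul_of_forall_c0 hd (fun z hz => ?_) hy hL
  simpa only [sum_range_mul_lowerMulVec] using ha _ (hS z hz)

theorem matClass_lowerMulVec_preimage_c0_iff {T S : ℕ → ℕ → ℝ} (hTS : IsLowerInverse T S)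
    (hST : IsLowerInverse S T) (Y : Set (ℕ → ℝ)) (A D : ℕ → ℕ → ℝ)
    (hD : ∀ n k, Tendsto (fun K => ∑ j ∈ Ico k K, A n j * S j k) atTop (𝓝 (D n k))) :
    matClass A {x | lowerMulVec T x ∈ c0Seq} Y ↔
      (∀ n, A n ∈ betaDual {x | lowerMulVec T x ∈ c0Seq}) ∧ matClass D c0Seq Y := by
  have hS (y : ℕ → ℝ) (hy : y ∈ c0Seq) : lowerMulVec S y ∈ {x | lowerMulVec T x ∈ c0Seq} := by
    simpa [lowerMulVec_lowerMulVec hTS] using hy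
  constructor
  · intro hA
    have hrow (n : ℕ) : A n ∈ betaDual {x | lowerMulVec T x ∈ c0Seq} := fun x hx =>
      let ⟨Ax, hAx, _⟩ := hA x hx
      ⟨Ax n, hAx n⟩
    refine ⟨hrow, fun y hy => ?_⟩
    obtain ⟨Ax, hAx, hAxY⟩ := hA _ (hS y hy)
    exact ⟨Ax, fun n => tendsto_sum_mul_of_mem_betaDual hS (hrow n) (hD n) hy (hAx n), hAxY⟩
  · rintro ⟨hrow, hDY⟩ x hx
    obtain ⟨Dy, hDy, hDyY⟩ := hDY _ hx
    refine ⟨Dy, fun n => ?_, hDyY⟩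
    obtain ⟨L, hL⟩ := hrow n x hx
    have hLD := tendsto_sum_mul_of_mem_betaDual hS (hrow n) (hD n) hx
      (by rwa [lowerMulVec_lowerMulVec hST])
    rwa [tendsto_nhds_unique hLD (hDy n)] at hL

theorem hilbert_diff_matrix_from_h0_general (m : ℕ) (Y : Set (ℕ → ℝ))
    (A : ℕ → ℕ → ℝ)
    (B : ℕ → ℕ → ℝ)
    (hBright : ∀ n k : ℕ, (∑ j ∈ Finset.Icc k n, hMat m n j * B j k) = if n = k then 1 else 0)
    (hBleft : ∀ n k : ℕ, (∑ j ∈ Finset.Icc k n, B n j * hMat m j k) = if n = k then 1 else 0)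
    (D : ℕ → ℕ → ℝ)
    (hD : ∀ n k : ℕ,
      Tendsto (fun J => ∑ j ∈ Finset.Icc k J, A n j * B j k) atTop (𝓝 (D n k))) :
    matClass A (hZero m) Y ↔
      ((∀ n : ℕ, (fun k => A n k) ∈ betaDual (hZero m)) ∧ matClass D c0Seq Y) := by
  refine matClass_lowerMulVec_preimage_c0_iff hBright hBleft Y A D fun n k => ?_
  refine (tendsto_add_atTop_iff_nat 1).1 ?_
  simpa only [Ico_add_one_right_eq_Icc] using hD n k

/-- `A ∈ (hZero m : Y)` iff every row of `A` lies in the β-dual of `hZero m` and the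
matrix `D`, `d_{nk} = ∑_{j=k}^∞ a_{nj} B_{jk}`, satisfies `D ∈ (c0Seq : Y)`. -/
theorem hilbert_diff_matrix_from_h0 (m : ℕ) (hm : 1 ≤ m) (Y : Set (ℕ → ℝ))
    (A : ℕ → ℕ → ℝ)
    (B : ℕ → ℕ → ℝ)
    (hBtri : ∀ n k : ℕ, n < k → B n k = 0)
    (hBright : ∀ n k : ℕ, (∑ j ∈ Finset.Icc k n, hMat m n j * B j k) = if n = k then 1 else 0)
    (hBleft : ∀ n k : ℕ, (∑ j ∈ Finset.Icc k n, B n j * hMat m j k) = if n = k then 1 else 0)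
    (D : ℕ → ℕ → ℝ)
    (hD : ∀ n k : ℕ,
      Tendsto (fun J => ∑ j ∈ Finset.Icc k J, A n j * B j k) atTop (𝓝 (D n k))) :
    matClass A (hZero m) Y ↔
      ((∀ n : ℕ, (fun k => A n k) ∈ betaDual (hZero m)) ∧ matClass D c0Seq Y) :=
  hilbert_diff_matrix_from_h0_general m Y A B hBright hBleft D hD
end
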